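/- arXiv:2508.07373 — 6 statements merged into one kernel-verified Lean document; each statement's English description precedes it below -/
import Mathlib

section
/- Let R be a commutative ring and M a finitely generated R-module. The map ω_M from the polynomial ring End_R(M)[u] (polynomials with coefficients in the R-algebra of R-linear endomorphisms of M) to the algebra End_{R[u]}(M[u]) of R[u]-linear endomorphisms of the R[u]-module M[u] of polynomials with coefficients in M, defined by ω_M(∑_i f_i u^i)(∑_j m_j u^j) = ∑_k (∑_{i+j=k} f_i(m_j)) u^k, is an isomorphism of R[u]-algebras; in particular it is bijective. -/
/-!
Extending endomorphisms of `M` coefficientwise and sending `u` to multiplication by `u` gives a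
ring map `ω : End_R(M)[u] → End_{R[u]}(M[u])`, the evaluation of polynomials at an element
commuting with all coefficients. Its value on a polynomial `P` is read off from the constant
vectors: `ω(P)(m)` has `k`-th coefficient `P_k(m)`, so `ω` is injective. Conversely an
`R[u]`-linear `Φ` is determined by its values on constant vectors, and the `k`-th coefficients of
`Φ(m)` are `R`-linear maps `Φ_k` of `m`. Since `M` is finitely generated, only finitely many
`Φ_k` are nonzero, so `∑ Φ_k u^k` is a polynomial, and `ω` maps it to `Φ`.
-/

open Polynomial

namespace Finsupp

theorem exists_finset_forall_support_subset {R M α N : Type*} [Semiring R] [AddCommMonoid M]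
    [Module R M] [Module.Finite R M] [AddCommMonoid N] [Module R N] (g : M →ₗ[R] α →₀ N) :
    ∃ t : Finset α, ∀ m, (g m).support ⊆ t := by
  classical
  obtain ⟨s, hs⟩ := Module.Finite.fg_top (R := R) (M := M)
  refine ⟨s.biUnion fun x => (g x).support, fun m => ?_⟩
  have hspan : Submodule.span R s ≤
      (supported N R (s.biUnion fun x => (g x).support : Set α)).comap g :=
    Submodule.span_le.mpr fun x hx =>
      (mem_supported R _).mpr <| by
        exact_mod_cast Finset.subset_biUnion_of_mem (fun x => (g x).support) hx
  exact_mod_cast (mem_supported R _).mp (hspan (hs ▸ Submodule.mem_top))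

end Finsupp

namespace PolynomialModule

variable (R M : Type*) [CommRing R] [AddCommGroup M] [Module R M]

theorem single_eq_X_pow_smul_single_zero (j : ℕ) (m : M) :
    single R j m = (X ^ j : R[X]) • single R 0 m := by
  rw [X_pow_eq_monomial, monomial_smul_single, one_smul, add_zero]

variable {R M} in
theorem linearMap_ext_single_zero {N : Type*} [AddCommGroup N] [Module R[X] N]
    {Φ Ψ : PolynomialModule R M →ₗ[R[X]] N} (h : ∀ m, Φ (single R 0 m) = Ψ (single R 0 m)) :
    Φ = Ψ := by
  ext q
  induction q using induction_linear with
  | zero => simp only [map_zero]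
  | add a b ha hb => rw [map_add, map_add, ha, hb]
  | single j m => rw [single_eq_X_pow_smul_single_zero, LinearMap.map_smul, LinearMap.map_smul, h]

noncomputable def mapEnd : Module.End R M →+* Module.End R[X] (PolynomialModule R M) where
  toFun f :=
    { toFun := map R f
      map_add' := map_add _
      map_smul' p q := by
        rw [RingHom.id_apply, map_smul, Algebra.algebraMap_self, Polynomial.map_id] }
  map_one' := LinearMap.ext fun _ => ext <| DFunLike.ext _ _ fun _ => rfl
  map_mul' _ _ := LinearMap.ext fun _ => ext <| DFunLike.ext _ _ fun _ => rfl
  map_zero' := LinearMap.ext fun _ => ext <| DFunLike.ext _ _ fun _ => rfl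
  map_add' _ _ := LinearMap.ext fun _ => ext <| DFunLike.ext _ _ fun _ => rfl

theorem coeff_mapEnd_apply (f : Module.End R M) (q : PolynomialModule R M) (k : ℕ) :
    (mapEnd R M f q).coeff k = f (q.coeff k) := rfl

theorem commute_mapEnd_algebraMap_X (f : Module.End R M) :
    Commute (mapEnd R M f) (algebraMap R[X] (Module.End R[X] (PolynomialModule R M)) X) :=
  LinearMap.ext fun q => (mapEnd R M f).map_smul X q

/-- The map `ω_M` of the paper. -/
noncomputable def ofPolynomialEnd :
    (Module.End R M)[X] →+* Module.End R[X] (PolynomialModule R M) :=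
  eval₂RingHom' (mapEnd R M) (algebraMap R[X] _ X) (commute_mapEnd_algebraMap_X R M)

theorem coeff_ofPolynomialEnd_apply (P : (Module.End R M)[X]) (q : PolynomialModule R M)
    (k : ℕ) :
    (ofPolynomialEnd R M P q).coeff k =
      ∑ ij ∈ Finset.HasAntidiagonal.antidiagonal k, P.coeff ij.1 (q.coeff ij.2) := by
  induction P using Polynomial.induction_on' with
  | add P Q hP hQ =>
    simp only [map_add, LinearMap.add_apply, coeff_add, Finsupp.add_apply, hP, hQ,
      Polynomial.coeff_add, Finset.sum_add_distrib]
  | monomial n f =>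
    have hX : (algebraMap R[X] (Module.End R[X] (PolynomialModule R M)) X ^ n) q =
        monomial n (1 : R) • q := by
      rw [← map_pow, Module.algebraMap_end_apply, X_pow_eq_monomial]
    have hω : ofPolynomialEnd R M (monomial n f) =
        mapEnd R M f * algebraMap R[X] (Module.End R[X] (PolynomialModule R M)) X ^ n :=
      eval₂_monomial _ _
    rw [hω, Module.End.mul_apply, hX, coeff_mapEnd_apply, monomial_smul_apply,
      Finset.Nat.sum_antidiagonal_eq_sum_range_succ_mk]
    simp only [one_smul, coeff_monomial, DFunLike.ite_apply, LinearMap.zero_apply,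
      Finset.sum_ite_eq, Finset.mem_range, Nat.lt_succ_iff, apply_ite f, map_zero]

theorem coeff_ofPolynomialEnd_apply_single_zero (P : (Module.End R M)[X]) (m : M) (k : ℕ) :
    (ofPolynomialEnd R M P (single R 0 m)).coeff k = P.coeff k m := by
  rw [coeff_ofPolynomialEnd_apply, Finset.sum_eq_single (k, 0)]
  · simp
  · rintro ⟨i, j⟩ hij hne
    have hj : j ≠ 0 := by rintro rfl; simp_all
    simp [Ne.symm hj]
  · simp

theorem ofPolynomialEnd_injective : Function.Injective (ofPolynomialEnd R M) := by
  refine (injective_iff_map_eq_zero _).mpr fun P hP => ?_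
  ext k m
  simpa [hP] using (coeff_ofPolynomialEnd_apply_single_zero R M P m k).symm

theorem ofPolynomialEnd_surjective [Module.Finite R M] :
    Function.Surjective (ofPolynomialEnd R M) := by
  intro Φ
  let g : M →ₗ[R] ℕ →₀ M :=
    (coeffLinearEquiv R R).toLinearMap ∘ₗ Φ.restrictScalars R ∘ₗ lsingle R 0
  obtain ⟨t, ht⟩ := Finsupp.exists_finset_forall_support_subset g
  let Φₖ : ℕ →₀ Module.End R M := Finsupp.onFinset t (fun k => Finsupp.lapply k ∘ₗ g)
    fun k hk => by
      obtain ⟨m, hm⟩ := DFunLike.ne_iff.mp hk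
      exact ht m (Finsupp.mem_support_iff.mpr hm)
  refine ⟨ofFinsupp (.ofCoeff Φₖ), linearMap_ext_single_zero fun m => ?_⟩
  ext k
  rw [coeff_ofPolynomialEnd_apply_single_zero, coeff_ofFinsupp]
  rfl

theorem ofPolynomialEnd_map_algebraMap (p : R[X]) :
    ofPolynomialEnd R M (p.map (algebraMap R (Module.End R M))) =
      algebraMap R[X] (Module.End R[X] (PolynomialModule R M)) p := by
  ext q k
  rw [coeff_ofPolynomialEnd_apply, Module.algebraMap_end_apply, smul_apply]
  simp only [coeff_map, Module.algebraMap_end_apply]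

end PolynomialModule

/-- Let `R` be a commutative ring and `M` a finitely generated `R`-module.
The map `ω_M : End_R(M)[u] → End_{R[u]}(M[u])`, defined by
`ω_M(∑ᵢ fᵢ uⁱ)(∑ⱼ mⱼ uʲ) = ∑ₖ (∑_{i+j=k} fᵢ(mⱼ)) uᵏ`, is an isomorphism of `R[u]`-algebras;
in particular it is bijective.  We phrase this as the existence of a ring isomorphism `e`
satisfying the above formula and compatible with the two structure maps from `R[u]`
(which is exactly an isomorphism of `R[u]`-algebras). -/
theorem stmt0 (R M : Type*) [CommRing R] [AddCommGroup M] [Module R M] [Module.Finite R M] :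
    letI : IsScalarTower (Polynomial R) (Polynomial R) (PolynomialModule R M) :=
      IsScalarTower.left _
    ∃ e : Polynomial (Module.End R M) ≃+* Module.End (Polynomial R) (PolynomialModule R M),
      (∀ p : Polynomial R,
          e (p.map (algebraMap R (Module.End R M))) =
            algebraMap (Polynomial R) (Module.End (Polynomial R) (PolynomialModule R M)) p) ∧
      (∀ (P : Polynomial (Module.End R M)) (q : PolynomialModule R M) (k : ℕ),
          (e P q).coeff k = ∑ ij ∈ Finset.HasAntidiagonal.antidiagonal k, (P.coeff ij.1) (q.coeff ij.2)) :=
  ⟨.ofBijective (PolynomialModule.ofPolynomialEnd R M)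
      ⟨PolynomialModule.ofPolynomialEnd_injective R M,
        PolynomialModule.ofPolynomialEnd_surjective R M⟩,
    PolynomialModule.ofPolynomialEnd_map_algebraMap R M,
    PolynomialModule.coeff_ofPolynomialEnd_apply R M⟩
end

section
/- Let R be a commutative ℚ-algebra and n a natural number. Equip the formal power series ring R⟦u⟧ with the coefficientwise (product) topology, R being discrete, and the matrix ring M_n(R⟦u⟧) with the corresponding product topology. Let N ∈ M_n(R⟦u⟧) be a matrix all of whose entries have zero constant coefficient. Then the family ((1/k!)·N^k)_{k∈ℕ} is summable in M_n(R⟦u⟧), the family ((1/k!)·(tr N)^k)_{k∈ℕ} is summable in R⟦u⟧, and det(∑_{k≥0} (1/k!)·N^k) = ∑_{k≥0} (1/k!)·(tr N)^k; that is, the determinant of the matrix exponential of N equals the exponential of the trace of N. -/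
/-!
Reducing modulo `X ^ K` makes `N` nilpotent and turns both series into finite sums, so it
suffices to show `det (exp A) = exp (trace A)` for a nilpotent matrix `A` over a commutative
`ℚ`-algebra. For that, `B t = exp (t • A)` is a polynomial matrix with `B' = A * B`; Jacobi's
formula `(det B)' = trace (adj B * B')` gives `(det B)' = trace A * det B`, which is also the
differential equation of `exp (t * trace A)`. Both polynomials have constant term `1`, hence agree,
and `t = 1` gives the claim.
-/

open Finset

theorem AddMonoidHom.map_pow_succ_of_leibniz {A : Type*} [Ring A] (D : A →+ A)
    (hD : ∀ x y, D (x * y) = D x * y + x * D y) {a : A} (hc : Commute a (D a)) (k : ℕ) :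
    D (a ^ (k + 1)) = (k + 1) • (D a * a ^ k) := by
  induction k with
  | zero => simp
  | succ k ih =>
    rw [pow_succ, hD, ih, smul_mul_assoc, mul_assoc, ← pow_succ, (hc.pow_left (k + 1)).eq,
      ← succ_nsmul]

theorem IsNilpotent.map_exp_of_leibniz {A : Type*} [Ring A] [Module ℚ A] (D : A →+ A)
    (hD : ∀ x y, D (x * y) = D x * y + x * D y) {a : A} (ha : IsNilpotent a)
    (hc : Commute a (D a)) : D (exp a) = D a * exp a := by
  obtain ⟨K, hK⟩ := ha
  have hD1 : D 1 = 0 := by simpa using hD 1 1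
  conv_rhs => rw [exp_eq_sum hK]
  rw [exp_eq_sum (pow_eq_zero_of_le K.le_succ hK), map_sum, sum_range_succ', mul_sum]
  simp only [map_rat_smul, pow_zero, hD1, smul_zero, add_zero, D.map_pow_succ_of_leibniz hD hc,
    mul_smul_comm, ← Nat.cast_smul_eq_nsmul ℚ, smul_smul]
  refine sum_congr rfl fun k _ => ?_
  rw [Nat.factorial_succ]
  push_cast
  field_simp

namespace Polynomial

open Matrix

variable {S : Type*} [CommRing S]

theorem derivative_det {ι : Type*} [Fintype ι] [DecidableEq ι] (P : Matrix ι ι S[X]) :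
    derivative P.det = trace (adjugate P * P.map derivative) := by
  have hdiag (i : ι) : (adjugate P * P.map derivative) i i =
      (P.updateCol i fun r => derivative (P r i)).det := by
    rw [← cramer_apply, cramer_eq_adjugate_mulVec]
    rfl
  simp only [Matrix.trace, Matrix.diag, hdiag, det_apply, map_sum]
  rw [sum_comm]
  refine sum_congr rfl fun σ _ => ?_
  simp only [Units.smul_def, map_zsmul, derivative_prod_finset, smul_sum]
  refine sum_congr rfl fun i _ => ?_
  rw [← mul_prod_erase _ _ (mem_univ i), updateCol_self, mul_comm]
  congr 2
  exact prod_congr rfl fun j hj => by rw [updateCol_ne (ne_of_mem_erase hj)]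

theorem _root_.Matrix.map_derivative_mul {l m n : Type*} [Fintype m] (M : Matrix l m S[X])
    (N : Matrix m n S[X]) :
    (M * N).map derivative = M.map derivative * N + M * N.map derivative := by
  ext i j
  simp [mul_apply, derivative_mul, sum_add_distrib]

theorem eq_of_derivative_eq_mul [Algebra ℚ S] {c f g : S[X]} (hf : derivative f = c * f)
    (hg : derivative g = c * g) (h0 : f.coeff 0 = g.coeff 0) : f = g := by
  rw [← sub_eq_zero]
  set h := f - g
  have hh : derivative h = c * h := by rw [derivative_sub, hf, hg, mul_sub]
  ext k
  rw [coeff_zero]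
  induction k using Nat.strong_induction_on with
  | _ k ih =>
    cases k with
    | zero => rw [coeff_sub, h0, sub_self]
    | succ k =>
      have hk : IsUnit ((k : S) + 1) := by
        simpa using (isUnit_iff_ne_zero.2 (Nat.cast_add_one_ne_zero (R := ℚ) k)).map
          (algebraMap ℚ S)
      refine hk.mul_left_cancel ?_
      have := congrArg (coeff · k) hh
      simp only [coeff_derivative, coeff_mul] at this
      rw [mul_comm, this, mul_zero]
      exact sum_eq_zero fun x hx => by
        rw [ih x.2 (by have := mem_antidiagonal.1 hx; omega), mul_zero]

end Polynomial

open Polynomial Matrix IsNilpotent in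
theorem Matrix.det_exp_of_isNilpotent {Q ι : Type*} [CommRing Q] [Algebra ℚ Q] [Fintype ι]
    [DecidableEq ι] {A : Matrix ι ι Q} (hA : IsNilpotent A) : (exp A).det = exp A.trace := by
  set x : Matrix ι ι Q[X] := (X : Q[X]) • A.map C
  set y : Q[X] := C A.trace * X
  have hx : IsNilpotent x := by
    obtain ⟨K, hK⟩ := hA
    refine ⟨K, ?_⟩
    rw [_root_.smul_pow, ← RingHom.mapMatrix_apply, ← map_pow, hK, map_zero, smul_zero]
  have hy : IsNilpotent y := (Commute.all _ _).isNilpotent_mul_right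
    ((isNilpotent_trace_of_isNilpotent hA).map C)
  have hx_eval (r : Q) : eval r (exp x).det = (exp (r • A)).det := by
    rw [← coe_evalRingHom, RingHom.map_det, map_exp hx]
    congr
    ext
    simp [x, mul_comm r]
  have hy_eval (r : Q) : eval r (exp y) = exp (r * A.trace) := by
    rw [← coe_evalRingHom, map_exp hy, coe_evalRingHom, eval_mul, eval_C, eval_X, mul_comm]
  have hdet : (exp x).det = exp y := by
    refine eq_of_derivative_eq_mul (c := C A.trace) ?_ ?_ ?_
    · let D : Matrix ι ι Q[X] →+ Matrix ι ι Q[X] := (derivative (R := Q)).toAddMonoidHom.mapMatrix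
      have hDx : D x = A.map C := by ext; simp [D, x]
      have hB : (exp x).map derivative = A.map C * exp x := by
        have := map_exp_of_leibniz D map_derivative_mul hx
          (by rw [hDx]; exact (Commute.refl _).smul_left X)
        rwa [hDx] at this
      rw [derivative_det, hB, trace_mul_comm, mul_assoc, mul_adjugate, Matrix.mul_smul, mul_one,
        trace_smul, smul_eq_mul, mul_comm, ← AddMonoidHom.map_trace]
    · simpa [y] using map_exp_of_leibniz (derivative (R := Q)).toAddMonoidHom
        (fun _ _ => derivative_mul) hy (Commute.all _ _)
    · simp [coeff_zero_eq_eval_zero, hx_eval, hy_eval, exp_zero]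
  simpa [hx_eval, hy_eval] using congrArg (eval 1) hdet

namespace PowerSeries

open IsNilpotent
open scoped WithPiTopology

theorem eq_of_forall_X_pow_dvd_sub {R : Type*} [Ring R] {f g : R⟦X⟧}
    (h : ∀ K, X ^ K ∣ f - g) : f = g := by
  ext d
  simpa [sub_eq_zero] using X_pow_dvd_iff.1 (h (d + 1)) d (Nat.lt_succ_self d)

namespace WithPiTopology

variable {R : Type*} [TopologicalSpace R]

theorem induced_coeff_eq_instTopologicalSpace [Semiring R] :
    TopologicalSpace.induced (fun (f : R⟦X⟧) (k : ℕ) => coeff k f) Pi.topologicalSpace =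
      instTopologicalSpace R := by
  refine le_antisymm (le_iInf fun d => ?_) (continuous_iff_le_induced.1 ?_)
  · refine (induced_mono (iInf_le _ (d ()))).trans_eq ?_
    rw [induced_compose]
    congr
    ext f
    exact congrArg f (Finsupp.unique_single d).symm
  · exact continuous_pi fun k => continuous_coeff R k

theorem hasSum_of_X_pow_dvd [Semiring R] {f : ℕ → R⟦X⟧} (hf : ∀ k, X ^ k ∣ f k) :
    HasSum f (mk fun d => ∑ k ∈ range (d + 1), coeff d (f k)) := by
  rw [hasSum_iff_hasSum_coeff]
  intro d
  rw [coeff_mk]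
  exact hasSum_sum_of_ne_finset_zero fun k hk => X_pow_dvd_iff.1 (hf k) d (by simpa using hk)

theorem map_eq_sum_range_of_hasSum [Ring R] [T2Space R] {f : ℕ → R⟦X⟧} (hf : ∀ k, X ^ k ∣ f k)
    {s : R⟦X⟧} (hs : HasSum f s) {S : Type*} [Semiring S] (φ : R⟦X⟧ →+* S) {K : ℕ}
    (hK : φ (X ^ K) = 0) : φ s = ∑ k ∈ range K, φ (f k) := by
  obtain ⟨q, hq⟩ : X ^ K ∣ s - ∑ k ∈ range K, f k := by
    refine X_pow_dvd_iff.2 fun d hd => ?_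
    rw [hs.unique (hasSum_of_X_pow_dvd hf), map_sub, coeff_mk, map_sum, sub_eq_zero]
    exact sum_subset (range_subset_range.2 hd) fun k _ hk =>
      X_pow_dvd_iff.1 (hf k) d (by simpa using hk)
  rw [sub_eq_iff_eq_add] at hq
  rw [hq, map_add, map_mul, hK, zero_mul, zero_add, map_sum]

theorem _root_.Matrix.hasSum_of_X_pow_dvd [Semiring R] {m n : Type*}
    {f : ℕ → Matrix m n R⟦X⟧} (hf : ∀ k i j, X ^ k ∣ f k i j) :
    HasSum f (Matrix.of fun i j => mk fun d => ∑ k ∈ range (d + 1), coeff d (f k i j)) :=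
  Pi.hasSum.2 fun i => Pi.hasSum.2 fun j =>
    PowerSeries.WithPiTopology.hasSum_of_X_pow_dvd (hf · i j)

theorem _root_.Matrix.map_eq_sum_range_of_hasSum [Ring R] [T2Space R] {m n : Type*}
    {f : ℕ → Matrix m n R⟦X⟧} (hf : ∀ k i j, X ^ k ∣ f k i j) {s : Matrix m n R⟦X⟧}
    (hs : HasSum f s) {S : Type*} [Semiring S] (φ : R⟦X⟧ →+* S) {K : ℕ}
    (hK : φ (X ^ K) = 0) : s.map φ = ∑ k ∈ range K, (f k).map φ := by
  ext i j
  rw [Matrix.map_apply, Matrix.sum_apply]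
  exact PowerSeries.WithPiTopology.map_eq_sum_range_of_hasSum (hf · i j)
    (Pi.hasSum.1 (Pi.hasSum.1 hs i) j) φ hK

theorem det_exp_eq_exp_trace [CommRing R] [Algebra ℚ R] [T2Space R] {ι : Type*} [Fintype ι]
    [DecidableEq ι] (N : Matrix ι ι R⟦X⟧) (hN : ∀ i j, constantCoeff (N i j) = 0) :
    Summable (fun k : ℕ => (k.factorial : ℚ)⁻¹ • N ^ k) ∧
      Summable (fun k : ℕ => (k.factorial : ℚ)⁻¹ • N.trace ^ k) ∧
      (∑' k : ℕ, (k.factorial : ℚ)⁻¹ • N ^ k).det =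
        ∑' k : ℕ, (k.factorial : ℚ)⁻¹ • N.trace ^ k := by
  choose M hM using fun i j => X_dvd_iff.2 (hN i j)
  have hNX : N = (X : R⟦X⟧) • Matrix.of M := by ext i j; simp [hM]
  have hE (k : ℕ) (i j : ι) : (X : R⟦X⟧) ^ k ∣ ((k.factorial : ℚ)⁻¹ • N ^ k) i j := by
    rw [hNX, smul_pow, Matrix.smul_apply, Matrix.smul_apply, smul_eq_mul, ← mul_smul_comm]
    exact dvd_mul_right _ _
  have hT (k : ℕ) : (X : R⟦X⟧) ^ k ∣ (k.factorial : ℚ)⁻¹ • N.trace ^ k := by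
    rw [hNX, Matrix.trace_smul, smul_eq_mul, mul_pow, ← mul_smul_comm]
    exact dvd_mul_right _ _
  have hsE := (Matrix.hasSum_of_X_pow_dvd hE).summable
  have hsT := (hasSum_of_X_pow_dvd hT).summable
  refine ⟨hsE, hsT, eq_of_forall_X_pow_dvd_sub fun K => ?_⟩
  rw [← Ideal.mem_span_singleton, ← Ideal.Quotient.eq]
  set φ := Ideal.Quotient.mk (Ideal.span {(X : R⟦X⟧) ^ K})
  have hφ : φ (X ^ K) = 0 := Ideal.Quotient.eq_zero_iff_mem.2 (Ideal.mem_span_singleton_self _)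
  have hA : φ.mapMatrix N ^ K = 0 := by
    rw [← map_pow, hNX, smul_pow]
    ext i j
    simp [hφ]
  have htr : φ N.trace ^ K = 0 := by
    rw [← map_pow, hNX, Matrix.trace_smul, smul_eq_mul, mul_pow, map_mul, hφ, zero_mul]
  have hmap (k : ℕ) :
      ((k.factorial : ℚ)⁻¹ • N ^ k).map φ = (k.factorial : ℚ)⁻¹ • φ.mapMatrix N ^ k := by
    rw [← RingHom.mapMatrix_apply, map_rat_smul, map_pow]
  rw [RingHom.map_det, RingHom.mapMatrix_apply,
    Matrix.map_eq_sum_range_of_hasSum hE hsE.hasSum φ hφ,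
    map_eq_sum_range_of_hasSum hT hsT.hasSum φ hφ]
  simp only [hmap, map_rat_smul, map_pow, ← exp_eq_sum hA, ← exp_eq_sum htr]
  rw [Matrix.det_exp_of_isNilpotent ⟨K, hA⟩, AddMonoidHom.map_trace, RingHom.mapMatrix_apply]

end WithPiTopology

end PowerSeries

/-- Let `R` be a commutative `ℚ`-algebra and `n ∈ ℕ`.  Equip `R⟦u⟧` with the
coefficientwise product topology (`R` being discrete) and `M_n(R⟦u⟧)` with the product
topology.  If `N ∈ M_n(R⟦u⟧)` has all entries with zero constant coefficient, then the
families `((1/k!)·N^k)_k` and `((1/k!)·(tr N)^k)_k` are summable, and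
`det (∑_k (1/k!)·N^k) = ∑_k (1/k!)·(tr N)^k`: the determinant of the matrix exponential of `N`
equals the exponential of its trace. -/
theorem stmt1 (R : Type*) [CommRing R] [Algebra ℚ R] (n : ℕ)
    (N : Matrix (Fin n) (Fin n) (PowerSeries R))
    (hN : ∀ i j, PowerSeries.constantCoeff (N i j) = 0) :
    letI : TopologicalSpace R := ⊥
    letI : TopologicalSpace (PowerSeries R) :=
      TopologicalSpace.induced (fun (f : PowerSeries R) (k : ℕ) => PowerSeries.coeff k f)
        Pi.topologicalSpace
    Summable (fun k : ℕ => (k.factorial : ℚ)⁻¹ • N ^ k) ∧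
      Summable (fun k : ℕ => (k.factorial : ℚ)⁻¹ • N.trace ^ k) ∧
      (∑' k : ℕ, (k.factorial : ℚ)⁻¹ • N ^ k).det =
        ∑' k : ℕ, (k.factorial : ℚ)⁻¹ • N.trace ^ k := by
  let _ : TopologicalSpace R := ⊥
  have : DiscreteTopology R := ⟨rfl⟩
  rw [PowerSeries.WithPiTopology.induced_coeff_eq_instTopologicalSpace]
  exact PowerSeries.WithPiTopology.det_exp_eq_exp_trace N hN
end

section
/- Let G be a finite abelian group acting on a set T and let t ∈ T with stabilizer S = Stab_G(t). Then the annihilator ideal of the basis vector δ_t in the ℂ[G]-module ℂT, namely {λ ∈ ℂ[G] : λ·δ_t = 0}, equals the ideal of ℂ[G] generated by 1 − e_S. -/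
/-!
The map `λ ↦ λ · δ_t` is the pushforward `ℂ[G] → ℂT` along the orbit map `g ↦ g • t`, whose
fibres are the cosets `xS`, while the coefficient of `λ e_S` at `x` is `|S|⁻¹` times the sum of `λ`
over `xS`. Hence `λ · δ_t = 0` forces `λ e_S = 0`, i.e. `λ = (1 - e_S) λ`. Conversely every element
of `S` fixes `δ_t`, so `e_S · δ_t = δ_t` and `1 - e_S` annihilates `δ_t`.
-/

/-- For a subgroup `K` of a group `Γ`, the idempotent `e_K := |K|⁻¹ ∑_{k ∈ K} k` of the group
algebra `ℂ[Γ]`. -/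
noncomputable def grpIdem (Γ : Type*) [CommGroup Γ] (K : Subgroup Γ) : MonoidAlgebra ℂ Γ :=
  (Nat.card K : ℂ)⁻¹ • ∑ᶠ k : K, MonoidAlgebra.of ℂ Γ (k : Γ)

open MonoidAlgebra MulAction

lemma Finsupp.mapDomain_apply_eq_sum_filter {α β M : Type*} [Fintype α] [DecidableEq β]
    [AddCommMonoid M] (f : α → β) (v : α →₀ M) (b : β) :
    v.mapDomain f b = ∑ a with f a = b, v a := by
  simp [Finsupp.mapDomain, Finsupp.sum_fintype, Finsupp.single_apply, Finset.sum_ite, eq_comm]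

lemma Representation.ofMulAction_asAlgebraHom_single_one {k G T : Type*} [CommSemiring k]
    [Monoid G] [MulAction G T] (x : MonoidAlgebra k G) (t : T) :
    (Representation.ofMulAction k G T).asAlgebraHom x (single t 1) = mapDomain (· • t) x := by
  induction x using MonoidAlgebra.induction_linear with
  | zero => simp
  | add x y hx hy => rw [map_add, LinearMap.add_apply, hx, hy, mapDomain_add]
  | single g r => simp [Representation.asAlgebraHom_single]

lemma sum_stabilizer_eq_sum_smul_eq {G T M : Type*} [Group G] [Fintype G] [MulAction G T]
    [AddCommMonoid M] [DecidableEq T] (t : T) [Fintype (stabilizer G t)] (f : G → M) (x : G) :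
    ∑ s : stabilizer G t, f (x * (s : G)⁻¹) = ∑ g with g • t = x • t, f g := by
  refine Finset.sum_bij (fun s _ => x * (s : G)⁻¹) ?_ ?_ ?_ (fun _ _ => rfl)
  · intro s _
    simp [mul_smul, inv_smul_eq_iff.mpr s.2.symm]
  · intro a _ b _ hab
    exact Subtype.ext (inv_injective (mul_left_cancel hab))
  · intro g hg
    rw [Finset.mem_filter] at hg
    refine ⟨⟨g⁻¹ * x, ?_⟩, Finset.mem_univ _, by simp⟩
    rw [mem_stabilizer_iff, mul_smul, ← hg.2, inv_smul_smul]

section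
variable {G : Type*} [CommGroup G]

lemma grpIdem_eq_sum (H : Subgroup G) [Fintype H] :
    grpIdem G H = (Nat.card H : ℂ)⁻¹ • ∑ h : H, single (h : G) 1 := by
  rw [grpIdem, finsum_eq_sum_of_fintype]
  rfl

lemma coeff_mul_grpIdem (H : Subgroup G) [Fintype H] (x : MonoidAlgebra ℂ G) (g : G) :
    (x * grpIdem G H).coeff g = (Nat.card H : ℂ)⁻¹ * ∑ h : H, x.coeff (g * (h : G)⁻¹) := by
  simp [grpIdem_eq_sum, Finset.mul_sum, coeff_sum]

variable {T : Type*} [MulAction G T] [Finite G]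

lemma coeff_mul_grpIdem_stabilizer (t : T) (x : MonoidAlgebra ℂ G) (g : G) :
    (x * grpIdem G (stabilizer G t)).coeff g =
      (Nat.card (stabilizer G t) : ℂ)⁻¹ * (mapDomain (· • t) x).coeff (g • t) := by
  classical
  have := Fintype.ofFinite G
  rw [coeff_mul_grpIdem, sum_stabilizer_eq_sum_smul_eq, coeff_mapDomain,
    Finsupp.mapDomain_apply_eq_sum_filter]

lemma asAlgebraHom_grpIdem_stabilizer (t : T) :
    (Representation.ofMulAction ℂ G T).asAlgebraHom (grpIdem G (stabilizer G t)) (single t 1) =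
      single t 1 := by
  have := Fintype.ofFinite (stabilizer G t)
  have hS : (Nat.card (stabilizer G t) : ℂ) ≠ 0 := Nat.cast_ne_zero.mpr Nat.card_pos.ne'
  have hfix (s : stabilizer G t) : (s : G) • t = t := s.2
  simp only [grpIdem_eq_sum, map_smul, map_sum, LinearMap.smul_apply, LinearMap.coe_sum,
    Finset.sum_apply, Representation.asAlgebraHom_single_one, Representation.ofMulAction_single,
    hfix, Finset.sum_const, Finset.card_univ, ← Nat.card_eq_fintype_card]
  rw [← Nat.cast_smul_eq_nsmul ℂ, smul_smul, inv_mul_cancel₀ hS, one_smul]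

lemma mul_grpIdem_stabilizer_eq_zero {t : T} {x : MonoidAlgebra ℂ G}
    (hx : (Representation.ofMulAction ℂ G T).asAlgebraHom x (single t 1) = 0) :
    x * grpIdem G (stabilizer G t) = 0 := by
  rw [Representation.ofMulAction_asAlgebraHom_single_one] at hx
  ext g
  simp [coeff_mul_grpIdem_stabilizer, hx]

end

/-- Let `G` be a finite abelian group acting on a set `T`, `t ∈ T`, and
`S = Stab_G(t)`.  The annihilator of the basis vector `δ_t` of the permutation module
`ℂT = (T →₀ ℂ)` (a `ℂ[G]`-module via the representation attached to the action) is the ideal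
of `ℂ[G]` generated by `1 − e_S`. -/
theorem stmt5 (G T : Type*) [CommGroup G] [Finite G] [MulAction G T] (t : T) :
    ∀ lam : MonoidAlgebra ℂ G,
      ((Representation.ofMulAction ℂ G T).asAlgebraHom lam) (MonoidAlgebra.single t (1 : ℂ)) = 0 ↔
        lam ∈ Ideal.span {1 - grpIdem G (MulAction.stabilizer G t)} := by
  intro lam
  rw [Ideal.mem_span_singleton]
  constructor
  · intro h
    exact ⟨lam, by rw [sub_mul, one_mul, mul_comm, mul_grpIdem_stabilizer_eq_zero h, sub_zero]⟩
  · rintro ⟨c, rfl⟩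
    rw [mul_comm, map_mul, Module.End.mul_apply, map_sub, map_one, LinearMap.sub_apply,
      Module.End.one_apply, asAlgebraHom_grpIdem_stabilizer, sub_self, map_zero]
end

section
/- Let G be a finite abelian group and H a subgroup of G. Regard ℂ[G]⟦u⟧ as a module over ℂ[H]⟦u⟧ via the injective ring homomorphism ℂ[H]⟦u⟧ → ℂ[G]⟦u⟧ applying, coefficientwise, the inclusion-induced map ℂ[H] → ℂ[G]; for P ∈ ℂ[G]⟦u⟧ let T_{G/H}(P) ∈ ℂ[H]⟦u⟧ and N_{G/H}(P) ∈ ℂ[H]⟦u⟧ denote the trace and the determinant, over ℂ[H]⟦u⟧, of the multiplication-by-P endomorphism of ℂ[G]⟦u⟧. Then for every P ∈ ℂ[G]⟦u⟧ with zero constant coefficient, T_{G/H}(P) has zero constant coefficient and N_{G/H}(exp_{ℂ[G]}(P)) = exp_{ℂ[H]}(T_{G/H}(P)). -/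
/-!
The argument works for any finite free extension `R → S` of commutative `ℚ`-algebras; `ℂ[G]` is
free over `ℂ[H]` on a set of coset representatives. Constant power series in a basis of `S/R` form
a basis of `S⟦X⟧` over `R⟦X⟧`, in which the `n`-th coefficient of the matrix of multiplication by
`f` is the matrix of multiplication by the `n`-th coefficient of `f`. Hence the trace commutes with
taking coefficients and with `d/dX`, and so does the matrix of multiplication.

Both `N(exp P)` and `exp(T P)` then solve `y' = (T P)' y` with `y(0) = 1`: for the norm, Jacobi's
formula `(det E)' = tr (adj E · E')` together with `E' = E · M(P')` gives `(det E)' = det E · tr M(P')`.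
Such a solution is unique, since the quotient of two of them has derivative zero.
-/

/-- The exponential `exp_A : uA⟦u⟧ → 1 + uA⟦u⟧`, `exp_A(Q) = ∑_{k≥0} Q^k/k!`, of a power
series `Q` (intended for `Q` with zero constant coefficient, in which case
`coeff n (Q ^ k) = 0` for `k > n` and the series converges coefficientwise, each coefficient
being given by the finite sum below). -/
noncomputable def psExp {A : Type*} [CommRing A] [Algebra ℚ A] (Q : PowerSeries A) :
    PowerSeries A :=
  PowerSeries.mk fun n =>
    ∑ k ∈ Finset.range (n + 1), (k.factorial : ℚ)⁻¹ • (PowerSeries.coeff (R := A) n) (Q ^ k)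

/-- The trace map `T_{G/H} : ℂ[G]⟦u⟧ → ℂ[H]⟦u⟧`: the trace, over `ℂ[H]⟦u⟧`, of the
multiplication-by-`P` endomorphism of `ℂ[G]⟦u⟧`, the module structure coming from the
(coefficientwise) inclusion-induced ring homomorphism `ℂ[H]⟦u⟧ → ℂ[G]⟦u⟧`. -/
noncomputable def psTrace (G : Type*) [CommGroup G] (H : Subgroup G)
    (P : PowerSeries (MonoidAlgebra ℂ G)) : PowerSeries (MonoidAlgebra ℂ ↥H) :=
  letI : Algebra (PowerSeries (MonoidAlgebra ℂ ↥H)) (PowerSeries (MonoidAlgebra ℂ G)) :=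
    (PowerSeries.map (MonoidAlgebra.mapDomainRingHom ℂ H.subtype)).toAlgebra
  LinearMap.trace (PowerSeries (MonoidAlgebra ℂ ↥H)) (PowerSeries (MonoidAlgebra ℂ G))
    (LinearMap.mulLeft (PowerSeries (MonoidAlgebra ℂ ↥H)) P)

/-- The norm map `N_{G/H} : ℂ[G]⟦u⟧ → ℂ[H]⟦u⟧`: the determinant, over `ℂ[H]⟦u⟧`, of the
multiplication-by-`P` endomorphism of `ℂ[G]⟦u⟧`. -/
noncomputable def psNorm (G : Type*) [CommGroup G] (H : Subgroup G)
    (P : PowerSeries (MonoidAlgebra ℂ G)) : PowerSeries (MonoidAlgebra ℂ ↥H) :=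
  letI : Algebra (PowerSeries (MonoidAlgebra ℂ ↥H)) (PowerSeries (MonoidAlgebra ℂ G)) :=
    (PowerSeries.map (MonoidAlgebra.mapDomainRingHom ℂ H.subtype)).toAlgebra
  LinearMap.det (LinearMap.mulLeft (PowerSeries (MonoidAlgebra ℂ ↥H)) P)

open PowerSeries

namespace Derivation

variable {R A : Type*} [CommRing R] [CommRing A] [Algebra R A] (D : Derivation R A A)

theorem leibniz_prod {κ : Type*} [DecidableEq κ] (s : Finset κ) (f : κ → A) :
    D (∏ i ∈ s, f i) = ∑ i ∈ s, (∏ j ∈ s.erase i, f j) * D (f i) := by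
  induction s using Finset.induction_on with
  | empty => simp
  | insert a s ha ih =>
    rw [Finset.prod_insert ha, leibniz, ih, Finset.sum_insert ha, Finset.erase_insert ha,
      smul_eq_mul, smul_eq_mul, Finset.mul_sum, add_comm]
    congr 1
    refine Finset.sum_congr rfl fun i hi => ?_
    rw [Finset.erase_insert_of_ne (ne_of_mem_of_not_mem hi ha).symm,
      Finset.prod_insert fun h => ha (Finset.mem_of_mem_erase h), mul_assoc]

theorem leibniz_det {n : Type*} [Fintype n] [DecidableEq n] (M : Matrix n n A) :
    D M.det = (M.adjugate * M.map D).trace := by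
  have h : D M.det = ∑ i, (M.updateCol i fun r => D (M r i)).det := by
    simp only [Matrix.det_apply, map_sum, Units.smul_def, map_zsmul, leibniz_prod,
      Finset.smul_sum]
    rw [Finset.sum_comm]
    refine Finset.sum_congr rfl fun i _ => Finset.sum_congr rfl fun σ _ => ?_
    rw [← Finset.mul_prod_erase Finset.univ
      (fun j => M.updateCol i (fun r => D (M r i)) (σ j) j) (Finset.mem_univ i),
      Matrix.updateCol_self, mul_comm]
    congr 2
    refine Finset.prod_congr rfl fun j hj => ?_
    rw [Matrix.updateCol_ne (Finset.ne_of_mem_erase hj)]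
  rw [h]
  simp only [← Matrix.cramer_apply, Matrix.cramer_eq_adjugate_mulVec, Matrix.trace,
    Matrix.diag, Matrix.mul_apply, Matrix.mulVec, dotProduct, Matrix.map_apply]

end Derivation

namespace PowerSeries

variable {A : Type*} [CommRing A]

theorem eq_of_derivative_eq_mul [IsAddTorsionFree A] {f g h : A⟦X⟧}
    (hf : d⁄dX A f = h * f) (hg : d⁄dX A g = h * g) (hg₀ : IsUnit (constantCoeff g))
    (hfg : constantCoeff f = constantCoeff g) : f = g := by
  obtain ⟨u, rfl⟩ := isUnit_iff_constantCoeff.mpr hg₀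
  rw [← Units.mul_inv_eq_one]
  refine derivative.ext ?_ ?_
  · rw [Derivation.leibniz, derivative_inv, hf, hg, derivative_one, smul_eq_mul, smul_eq_mul]
    linear_combination (-(f * h * ↑u⁻¹)) * u.inv_mul
  · rw [map_mul, map_one, hfg, ← map_mul, u.mul_inv, map_one]

variable [Algebra ℚ A]

theorem constantCoeff_psExp (P : A⟦X⟧) : constantCoeff (psExp P) = 1 := by
  rw [← coeff_zero_eq_constantCoeff_apply, psExp, coeff_mk]
  simp

theorem psExp_eq_subst {P : A⟦X⟧} (hP : constantCoeff P = 0) : psExp P = (exp A).subst P := by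
  ext n
  have hPn : ∀ k, n < k → coeff n (P ^ k) = 0 := fun k hk =>
    X_pow_dvd_iff.mp (pow_dvd_pow_of_dvd (X_dvd_iff.mpr hP) k) n hk
  rw [coeff_subst' (HasSubst.of_constantCoeff_zero' hP),
    finsum_eq_sum_of_support_subset _ (s := Finset.range (n + 1)) fun k hk => ?_, psExp, coeff_mk]
  · refine Finset.sum_congr rfl fun k _ => ?_
    rw [coeff_exp, smul_eq_mul, ← Algebra.smul_def, one_div]
  · by_contra hkn
    exact hk (smul_eq_zero_of_right _ (hPn k (by simpa using hkn)))

theorem derivative_psExp {P : A⟦X⟧} (hP : constantCoeff P = 0) :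
    d⁄dX A (psExp P) = psExp P * d⁄dX A P := by
  rw [psExp_eq_subst hP, derivative_subst (HasSubst.of_constantCoeff_zero' hP), derivative_exp]

end PowerSeries

namespace QuotientGroup

variable {G : Type*} [CommGroup G] (H : Subgroup G)

noncomputable def equivProdSubgroup : G ≃ (G ⧸ H) × H where
  toFun g := (g, ⟨(Quotient.out (g : G ⧸ H))⁻¹ * g, QuotientGroup.eq.mp (out_eq' _)⟩)
  invFun p := Quotient.out p.1 * p.2
  left_inv g := by simp
  right_inv p := by
    have h : ((Quotient.out p.1 * p.2 : G) : G ⧸ H) = p.1 := by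
      rw [mk_mul_of_mem _ p.2.2, out_eq']
    ext
    · exact h
    · simp [h]

theorem equivProdSubgroup_mul (h : H) (g : G) :
    equivProdSubgroup H (h * g) = ((equivProdSubgroup H g).1, h * (equivProdSubgroup H g).2) := by
  have hg : ((h * g : G) : G ⧸ H) = g := by rw [mul_comm, mk_mul_of_mem _ h.2]
  ext
  · exact hg
  · simp [equivProdSubgroup, hg, mul_left_comm]

end QuotientGroup

namespace MonoidAlgebra

variable (k : Type*) [CommSemiring k] {G : Type*} [CommGroup G] (H : Subgroup G)

noncomputable abbrev algebraSubgroup : Algebra (MonoidAlgebra k H) (MonoidAlgebra k G) :=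
  (mapDomainRingHom k H.subtype).toAlgebra

attribute [local instance] algebraSubgroup

noncomputable def cosetEquiv : MonoidAlgebra k G ≃+ (G ⧸ H →₀ MonoidAlgebra k H) :=
  coeffAddEquiv.trans <| (Finsupp.domCongr (QuotientGroup.equivProdSubgroup H)).trans <|
    Finsupp.curryAddEquiv.trans (Finsupp.mapRange.addEquiv coeffAddEquiv.symm)

theorem cosetEquiv_single (g : G) (c : k) :
    cosetEquiv k H (single g c) =
      Finsupp.single (QuotientGroup.equivProdSubgroup H g).1
        (single (QuotientGroup.equivProdSubgroup H g).2 c) := by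
  simp [cosetEquiv]

theorem cosetEquiv_smul (s : MonoidAlgebra k H) (x : MonoidAlgebra k G) :
    cosetEquiv k H (s • x) = s • cosetEquiv k H x := by
  induction x using induction_linear with
  | zero => simp
  | add x y hx hy => rw [smul_add, map_add, hx, hy, map_add, smul_add]
  | single g c =>
    induction s using induction_linear with
    | zero => simp
    | add s t hs ht => rw [add_smul, map_add, hs, ht, add_smul]
    | single h a =>
      rw [Algebra.smul_def, RingHom.algebraMap_toAlgebra, mapDomainRingHom_apply,
        mapDomain_single, single_mul_single, cosetEquiv_single, cosetEquiv_single,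
        Subgroup.coe_subtype, QuotientGroup.equivProdSubgroup_mul, Finsupp.smul_single,
        smul_eq_mul, single_mul_single]

noncomputable def cosetBasis : Module.Basis (G ⧸ H) (MonoidAlgebra k H) (MonoidAlgebra k G) :=
  .ofRepr { cosetEquiv k H with map_smul' := cosetEquiv_smul k H }

instance : Module.Free (MonoidAlgebra k H) (MonoidAlgebra k G) := .of_basis (cosetBasis k H)

instance [Finite G] : Module.Finite (MonoidAlgebra k H) (MonoidAlgebra k G) :=
  .of_basis (cosetBasis k H)

end MonoidAlgebra

namespace Module.Basis

section

variable {ι R S : Type*} [Finite ι] [CommRing R] [CommRing S] [Algebra R S] (b : Basis ι R S)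

noncomputable def powerSeriesRepr : S⟦X⟧ ≃ₗ[R⟦X⟧] (ι →₀ R⟦X⟧) where
  toFun f := Finsupp.equivFunOnFinite.symm fun i =>
    PowerSeries.mk fun n => b.repr (coeff n f) i
  invFun c := PowerSeries.mk fun n => b.repr.symm (c.mapRange (coeff n) (map_zero _))
  map_add' f g := by ext; simp
  map_smul' r f := by
    ext i n
    have h : coeff n (r • f) =
        ∑ p ∈ Finset.HasAntidiagonal.antidiagonal n, coeff p.1 r • coeff p.2 f := by
      simp [Algebra.smul_def, algebraMap_apply'', coeff_mul]
    simp [h, coeff_mul]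
  left_inv f := by
    ext n
    rw [coeff_mk, ← b.repr.symm_apply_apply (coeff n f)]
    congr 1
    ext i
    simp
  right_inv c := by ext; simp

noncomputable def powerSeries : Basis ι R⟦X⟧ S⟦X⟧ := .ofRepr b.powerSeriesRepr

@[simp]
theorem coeff_powerSeries_repr (f : S⟦X⟧) (i : ι) (n : ℕ) :
    coeff n (b.powerSeries.repr f i) = b.repr (coeff n f) i := by
  simp [powerSeries, powerSeriesRepr]

@[simp]
theorem powerSeries_apply (i : ι) : b.powerSeries i = C (b i) := by
  ext n
  simp [powerSeries, powerSeriesRepr, coeff_C]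

end

section

variable {ι R S : Type*} [Fintype ι] [DecidableEq ι] [CommRing R] [CommRing S] [Algebra R S]
  (b : Basis ι R S)

theorem coeff_leftMulMatrix_powerSeries (f : S⟦X⟧) (i j : ι) (n : ℕ) :
    coeff n (Algebra.leftMulMatrix b.powerSeries f i j) =
      Algebra.leftMulMatrix b (coeff n f) i j := by
  simp [Algebra.leftMulMatrix_eq_repr_mul, coeff_mul_C]

theorem leftMulMatrix_powerSeries_derivative (f : S⟦X⟧) :
    Algebra.leftMulMatrix b.powerSeries (d⁄dX S f) =
      (Algebra.leftMulMatrix b.powerSeries f).map (d⁄dX R) := by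
  ext i j n
  simp only [Matrix.map_apply, coeff_derivative, coeff_leftMulMatrix_powerSeries,
    ← Nat.cast_add_one, ← nsmul_eq_mul', map_nsmul, Matrix.smul_apply]

end

end Module.Basis

namespace PowerSeries

variable {R S : Type*} [CommRing R] [CommRing S] [Algebra R S] [Module.Free R S]
  [Module.Finite R S]

theorem coeff_trace (f : S⟦X⟧) (n : ℕ) :
    coeff n (Algebra.trace R⟦X⟧ S⟦X⟧ f) = Algebra.trace R S (coeff n f) := by
  classical
  let b := Module.Free.chooseBasis R S
  rw [Algebra.trace_eq_matrix_trace b.powerSeries, Algebra.trace_eq_matrix_trace b, Matrix.trace,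
    Matrix.trace, map_sum]
  simp [Module.Basis.coeff_leftMulMatrix_powerSeries]

theorem constantCoeff_trace (f : S⟦X⟧) :
    constantCoeff (Algebra.trace R⟦X⟧ S⟦X⟧ f) = Algebra.trace R S (constantCoeff f) := by
  rw [← coeff_zero_eq_constantCoeff_apply, coeff_trace, coeff_zero_eq_constantCoeff_apply]

theorem constantCoeff_norm (f : S⟦X⟧) :
    constantCoeff (Algebra.norm R⟦X⟧ f) = Algebra.norm R (constantCoeff f) := by
  classical
  let b := Module.Free.chooseBasis R S
  rw [Algebra.norm_eq_matrix_det b.powerSeries, Algebra.norm_eq_matrix_det b, RingHom.map_det]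
  congr 1
  ext i j
  rw [RingHom.mapMatrix_apply, Matrix.map_apply, ← coeff_zero_eq_constantCoeff_apply,
    Module.Basis.coeff_leftMulMatrix_powerSeries, coeff_zero_eq_constantCoeff_apply]

theorem derivative_trace (f : S⟦X⟧) :
    d⁄dX R (Algebra.trace R⟦X⟧ S⟦X⟧ f) = Algebra.trace R⟦X⟧ S⟦X⟧ (d⁄dX S f) := by
  ext n
  simp only [coeff_derivative, coeff_trace, ← Nat.cast_add_one, ← nsmul_eq_mul', map_nsmul]

theorem derivative_norm_psExp [Algebra ℚ S] {P : S⟦X⟧} (hP : constantCoeff P = 0) :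
    d⁄dX R (Algebra.norm R⟦X⟧ (psExp P)) =
      d⁄dX R (Algebra.trace R⟦X⟧ S⟦X⟧ P) * Algebra.norm R⟦X⟧ (psExp P) := by
  classical
  let b := (Module.Free.chooseBasis R S).powerSeries
  rw [Algebra.norm_eq_matrix_det b, Derivation.leibniz_det,
    ← Module.Basis.leftMulMatrix_powerSeries_derivative, derivative_psExp hP, map_mul,
    ← Matrix.mul_assoc, Matrix.adjugate_mul, Matrix.smul_mul, Matrix.one_mul, Matrix.trace_smul,
    ← Algebra.trace_eq_matrix_trace, ← derivative_trace, smul_eq_mul, mul_comm]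

theorem norm_psExp [Algebra ℚ R] [Algebra ℚ S] {P : S⟦X⟧} (hP : constantCoeff P = 0) :
    Algebra.norm R⟦X⟧ (psExp P) = psExp (Algebra.trace R⟦X⟧ S⟦X⟧ P) := by
  have hT : constantCoeff (Algebra.trace R⟦X⟧ S⟦X⟧ P) = 0 := by
    rw [constantCoeff_trace, hP, map_zero]
  have := IsAddTorsionFree.of_module_rat R
  refine eq_of_derivative_eq_mul (derivative_norm_psExp hP) ?_ ?_ ?_
  · rw [derivative_psExp hT, mul_comm]
  · simp [constantCoeff_psExp]
  · rw [constantCoeff_norm, constantCoeff_psExp, constantCoeff_psExp, map_one]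

end PowerSeries

attribute [local instance] MonoidAlgebra.algebraSubgroup

/-- Let `G` be a finite abelian group and `H ≤ G`.  For every
`P ∈ ℂ[G]⟦u⟧` with zero constant coefficient, `T_{G/H}(P)` has zero constant coefficient and
`N_{G/H}(exp_{ℂ[G]}(P)) = exp_{ℂ[H]}(T_{G/H}(P))`. -/
theorem stmt9 (G : Type*) [CommGroup G] [Finite G] (H : Subgroup G)
    (P : PowerSeries (MonoidAlgebra ℂ G))
    (hP : PowerSeries.constantCoeff (R := MonoidAlgebra ℂ G) P = 0) :
    PowerSeries.constantCoeff (R := MonoidAlgebra ℂ ↥H) (psTrace G H P) = 0 ∧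
      psNorm G H (psExp P) = psExp (psTrace G H P) := by
  have hT : psTrace G H P = Algebra.trace _ _ P := rfl
  have hN : psNorm G H (psExp P) = Algebra.norm _ (psExp P) := rfl
  exact ⟨by rw [hT, constantCoeff_trace, hP, map_zero], by rw [hN, hT, norm_psExp hP]⟩
end

section
/- Let G be a finite abelian group acting on a finite set T. Then ∑_{ψ} #{orbits o of G on T : Stab_G(t) ⊄ ker ψ for some (equivalently, every) t ∈ o} = ∑_{t∈T} (|Stab_G(t)| − 1), where the outer sum on the left runs over all group homomorphisms ψ : G → ℂˣ. (Since G is abelian, the stabilizer is constant along each orbit.) -/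
open MulAction

private lemma stab_eq_of_orbitRel {G T : Type*} [CommGroup G] [MulAction G T] {a b : T}
    (h : MulAction.orbitRel G T a b) :
    MulAction.stabilizer G a = MulAction.stabilizer G b := by
  obtain ⟨g, hg⟩ := h
  rw [← hg, MulAction.stabilizer_smul_eq_stabilizer_map_conj]
  ext x
  simp [Subgroup.mem_map, MulAut.conj]

private lemma card_monoidHom (G : Type*) [CommGroup G] [Finite G] :
    Nat.card (G →* ℂˣ) = Nat.card G := by
  have : NeZero ((Monoid.exponent G : ℕ) : ℂ) :=
    ⟨by exact_mod_cast Monoid.exponent_ne_zero_of_finite (G := G)⟩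
  exact Nat.card_congr (CommGroup.monoidHom_mulEquiv_of_hasEnoughRootsOfUnity G ℂ).some.toEquiv

private noncomputable def homQuotEquiv (G : Type*) [CommGroup G] (H : Subgroup G) :
    (G ⧸ H →* ℂˣ) ≃ {ψ : G →* ℂˣ // H ≤ ψ.ker} where
  toFun φ := ⟨φ.comp (QuotientGroup.mk' H), fun h hh => by
    simp [MonoidHom.mem_ker, (QuotientGroup.eq_one_iff h).mpr hh]⟩
  invFun ψ := QuotientGroup.lift H ψ.1 (fun h hh => ψ.2 hh)
  left_inv φ := by
    ext x
    rfl
  right_inv ψ := by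
    ext x
    rfl

private lemma finite_hom (G : Type*) [CommGroup G] [Finite G] : Finite (G →* ℂˣ) :=
  have : NeZero ((Monoid.exponent G : ℕ) : ℂ) :=
    ⟨by exact_mod_cast Monoid.exponent_ne_zero_of_finite (G := G)⟩
  Finite.of_equiv G (CommGroup.monoidHom_mulEquiv_of_hasEnoughRootsOfUnity G ℂ).some.toEquiv.symm

private lemma card_not_le_ker {G : Type*} [CommGroup G] [Finite G] (H : Subgroup G) :
    Nat.card {ψ : G →* ℂˣ // ¬ H ≤ ψ.ker} = H.index * (Nat.card H - 1) := by
  classical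
  have : Finite (G →* ℂˣ) := finite_hom G
  have : Fintype (G →* ℂˣ) := Fintype.ofFinite _
  have hle : Nat.card {ψ : G →* ℂˣ // H ≤ ψ.ker} = H.index := by
    rw [← Nat.card_congr (homQuotEquiv G H), card_monoidHom, Subgroup.index_eq_card]
  have hcompl : Nat.card {ψ : G →* ℂˣ // ¬ H ≤ ψ.ker} =
      Nat.card (G →* ℂˣ) - Nat.card {ψ : G →* ℂˣ // H ≤ ψ.ker} := by
    simp only [Nat.card_eq_fintype_card]
    exact Fintype.card_subtype_compl _
  rw [hcompl, hle, card_monoidHom, ← H.index_mul_card]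
  obtain ⟨s, hs⟩ : ∃ s, Nat.card H = s + 1 :=
    ⟨Nat.card H - 1, (Nat.succ_pred_eq_of_pos Nat.card_pos).symm⟩
  rw [hs]
  simp [Nat.mul_succ]

/-- For a finite abelian group `G` acting on a finite set `T`,
`∑_{ψ : G →* ℂˣ} #{orbits o : the stabilizer of (some, equivalently any, point of) o is not
contained in ker ψ} = ∑_{t ∈ T} (|Stab_G(t)| − 1)`.  The outer sum on the left runs over all
group homomorphisms `ψ : G → ℂˣ` (a finite family since `G` is finite, so `finsum` agrees with
the honest sum). -/
theorem stmt14 (G T : Type*) [CommGroup G] [Finite G] [Fintype T] [MulAction G T] :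
    ∑ᶠ ψ : G →* ℂˣ,
      Nat.card {o : Quotient (MulAction.orbitRel G T) //
        ∃ t : T, Quotient.mk (MulAction.orbitRel G T) t = o ∧
          ¬ MulAction.stabilizer G t ≤ ψ.ker} =
    ∑ t : T, (Nat.card (MulAction.stabilizer G t) - 1) := by
  classical
  have hfin : Finite (G →* ℂˣ) := finite_hom G
  have : Fintype (G →* ℂˣ) := Fintype.ofFinite _
  have : Fintype (Quotient (MulAction.orbitRel G T)) := Quotient.fintype _
  rw [finsum_eq_sum_of_fintype]
  have hpred : ∀ (ψ : G →* ℂˣ) (o : Quotient (MulAction.orbitRel G T)),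
      (∃ t : T, Quotient.mk (MulAction.orbitRel G T) t = o ∧
        ¬ MulAction.stabilizer G t ≤ ψ.ker)
      ↔ ¬ MulAction.stabilizer G (Quotient.out o) ≤ ψ.ker := by
    intro ψ o
    constructor
    · rintro ⟨t, ht, h⟩
      have hrel : MulAction.orbitRel G T t (Quotient.out o) :=
        Quotient.exact (by rw [ht]; exact (Quotient.out_eq o).symm)
      rwa [stab_eq_of_orbitRel hrel] at h
    · intro h
      exact ⟨Quotient.out o, Quotient.out_eq o, h⟩
  calc
    ∑ ψ : G →* ℂˣ, Nat.card {o : Quotient (MulAction.orbitRel G T) //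
        ∃ t : T, Quotient.mk (MulAction.orbitRel G T) t = o ∧
          ¬ MulAction.stabilizer G t ≤ ψ.ker}
      = ∑ ψ : G →* ℂˣ, Nat.card {o : Quotient (MulAction.orbitRel G T) //
          ¬ MulAction.stabilizer G (Quotient.out o) ≤ ψ.ker} := by
        refine Finset.sum_congr rfl fun ψ _ => ?_
        exact Nat.card_congr (Equiv.subtypeEquivRight (hpred ψ))
    _ = ∑ o : Quotient (MulAction.orbitRel G T),
          Nat.card {ψ : G →* ℂˣ // ¬ MulAction.stabilizer G (Quotient.out o) ≤ ψ.ker} := by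
        simp only [Nat.card_eq_fintype_card, Fintype.card_subtype, Finset.card_filter]
        exact Finset.sum_comm
    _ = ∑ o : Quotient (MulAction.orbitRel G T),
          (MulAction.stabilizer G (Quotient.out o)).index *
            (Nat.card (MulAction.stabilizer G (Quotient.out o)) - 1) := by
        refine Finset.sum_congr rfl fun o _ => ?_
        exact card_not_le_ker _
    _ = ∑ o : Quotient (MulAction.orbitRel G T),
          Nat.card (MulAction.orbit G (Quotient.out o)) *
            (Nat.card (MulAction.stabilizer G (Quotient.out o)) - 1) := by
        refine Finset.sum_congr rfl fun o _ => ?_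
        congr 1
        rw [Subgroup.index_eq_card]
        exact (Nat.card_congr (MulAction.orbitEquivQuotientStabilizer G (Quotient.out o))).symm
    _ = ∑ t : T, (Nat.card (MulAction.stabilizer G t) - 1) := by
        rw [Fintype.sum_equiv (MulAction.selfEquivSigmaOrbits G T)
          (fun t => Nat.card (MulAction.stabilizer G t) - 1)
          (fun x => Nat.card (MulAction.stabilizer G (Quotient.out x.1)) - 1)
          (fun t => ?_)]
        · rw [← Finset.univ_sigma_univ, Finset.sum_sigma]
          refine Finset.sum_congr rfl fun o _ => ?_
          simp [Finset.sum_const, Finset.card_univ, Nat.card_eq_fintype_card, mul_comm]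
        · have hx : t ∈ MulAction.orbit G
              (Quotient.out ((MulAction.selfEquivSigmaOrbits G T) t).1) :=
            ((MulAction.selfEquivSigmaOrbits G T) t).2.2
          exact congrArg (fun S : Subgroup G => Nat.card S - 1)
            (stab_eq_of_orbitRel ((MulAction.orbitRel_apply).mpr hx))
end

section
/- Let G be a finite abelian group, g a natural number, and B ∈ M_g(ℂ[G]) a g×g matrix over the group algebra ℂ[G]. View ℂ[G]^g as a finite-dimensional ℂ-vector space. Then the determinant over ℂ of the ℂ-linear endomorphism of ℂ[G]^g given by multiplication by B equals ∏_{ψ} det_ℂ(ψ(B)), the product running over all group homomorphisms ψ : G → ℂˣ, where ψ(B) ∈ M_g(ℂ) is the matrix obtained by applying the induced ℂ-algebra homomorphism ψ : ℂ[G] → ℂ to each entry of B. -/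
/-!
Over `ℂ`, the determinant of a `ℂ[G]`-linear endomorphism of `ℂ[G]^g` is the norm
`N_{ℂ[G]/ℂ}` of its `ℂ[G]`-determinant, and each character commutes with `det`. Evaluation at all
characters is an algebra isomorphism `ℂ[G] ≃ ℂ^Ĝ` (the evaluations `ψ ↦ ψ a` are distinct
characters of `Ĝ`, hence linearly independent, and `|Ĝ| = |G|`), and the norm on `ℂ^Ĝ` is the
product of the coordinates, so `N(x) = ∏_ψ ψ(x)`.
-/

/-- The `ℂ`-algebra homomorphism `ℂ[Γ] → ℂ` induced by a character `χ : Γ → ℂˣ`. -/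
noncomputable def charAlgHom (Γ : Type*) [CommGroup Γ] (χ : Γ →* ℂˣ) :
    MonoidAlgebra ℂ Γ →ₐ[ℂ] ℂ :=
  MonoidAlgebra.lift ℂ ℂ Γ ((Units.coeHom ℂ).comp χ)

open Module

theorem Algebra.norm_pi {R ι : Type*} [CommRing R] [Fintype ι] (f : ι → R) :
    Algebra.norm R f = ∏ i, f i := by
  classical
  have : Algebra.leftMulMatrix (Pi.basisFun R ι) f = Matrix.diagonal f := by
    ext i j
    simp [Algebra.leftMulMatrix_eq_repr_mul, Matrix.diagonal_apply, Pi.single_apply]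
  rw [Algebra.norm_eq_matrix_det (Pi.basisFun R ι), this, Matrix.det_diagonal]

namespace MonoidAlgebra

variable {K G : Type*} [Field K] [CommGroup G]

variable (K G) in
noncomputable def fourier : MonoidAlgebra K G →ₐ[K] ((G →* Kˣ) → K) :=
  AlgHom.pi fun ψ => lift K K G ((Units.coeHom K).comp ψ)

lemma fourier_single (a : G) :
    fourier K G (single a 1) = ⇑((Units.coeHom K).comp (MonoidHom.eval a)) := by
  ext ψ
  simp [fourier]

variable [Finite G] [HasEnoughRootsOfUnity K (Monoid.exponent G)]

lemma fourier_injective : Function.Injective (fourier K G) := by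
  refine LinearMap.injective_of_linearIndependent (f := (fourier K G).toLinearMap)
    (basis G K).span_eq ?_
  have hev :
      Function.Injective fun a : G => (Units.coeHom K).comp (MonoidHom.eval (N := Kˣ) a) := by
    intro a b h
    refine (CommGroup.forall_apply_eq_apply_iff G (M := K)).1 fun ψ => Units.ext ?_
    exact DFunLike.congr_fun h ψ
  have hbasis : ⇑(fourier K G).toLinearMap ∘ basis G K =
      fun a => ⇑((Units.coeHom K).comp (MonoidHom.eval a)) := by
    funext a
    simp [fourier_single]
  rw [hbasis]
  exact (linearIndependent_monoidHom (G →* Kˣ) K).comp _ hev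

lemma fourier_bijective : Function.Bijective (fourier K G) := by
  have : Fintype (G →* Kˣ) := Fintype.ofFinite _
  have : FiniteDimensional K (MonoidAlgebra K G) := .of_basis (basis G K)
  refine ⟨fourier_injective, (LinearMap.injective_iff_surjective_of_finrank_eq_finrank
    (f := (fourier K G).toLinearMap) ?_).1 fourier_injective⟩
  rw [finrank_eq_nat_card_basis (basis G K), finrank_fintype_fun_eq_card, Fintype.card_eq_nat_card,
    CommGroup.card_monoidHom_of_hasEnoughRootsOfUnity]

theorem norm_eq_finprod (x : MonoidAlgebra K G) :
    Algebra.norm K x = ∏ᶠ ψ : G →* Kˣ, lift K K G ((Units.coeHom K).comp ψ) x := by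
  have : Fintype (G →* Kˣ) := Fintype.ofFinite _
  rw [← Algebra.norm_eq_of_algEquiv (.ofBijective _ fourier_bijective), finprod_eq_prod_of_fintype]
  exact Algebra.norm_pi _

end MonoidAlgebra

/-- Let `G` be a finite abelian group, `g ∈ ℕ`, and `B` a `g × g` matrix over
`ℂ[G]`.  The determinant over `ℂ` of the `ℂ`-linear endomorphism of `ℂ[G]^g` given by
multiplication by `B` equals `∏_ψ det_ℂ(ψ(B))`, the (finite) product running over all group
homomorphisms `ψ : G → ℂˣ`, where `ψ(B)` is the complex matrix obtained by applying the
induced algebra homomorphism `ψ : ℂ[G] → ℂ` entrywise. -/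
theorem stmt15 (G : Type*) [CommGroup G] [Finite G] (g : ℕ)
    (B : Matrix (Fin g) (Fin g) (MonoidAlgebra ℂ G)) :
    LinearMap.det (LinearMap.restrictScalars ℂ B.mulVecLin) =
      ∏ᶠ ψ : G →* ℂˣ, (B.map (charAlgHom G ψ)).det := by
  calc LinearMap.det (LinearMap.restrictScalars ℂ B.mulVecLin)
      = Algebra.norm ℂ B.det := by
        rw [LinearMap.det_restrictScalars, ← Matrix.toLin'_apply', LinearMap.det_toLin']
    _ = ∏ᶠ ψ : G →* ℂˣ, charAlgHom G ψ B.det := MonoidAlgebra.norm_eq_finprod _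
    _ = ∏ᶠ ψ : G →* ℂˣ, (B.map (charAlgHom G ψ)).det :=
        finprod_congr fun ψ => AlgHom.map_det _ _
end
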